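/- arXiv:1211.0925 — 2 statements merged into one kernel-verified Lean document; each statement's English description precedes it below -/
import Mathlib

section
/- For every β > 0, the free energy of the non-uniform model satisfies f^nu(β) ≥ β − log 2. -/
open scoped Classical
open Filter

noncomputable section

/-- The three allowed steps: east `(1,0)`, north `(0,1)`, south `(0,-1)`. -/
def stepVec : Fin 3 → ℤ × ℤ := ![(1, 0), (0, 1), (0, -1)]

/-- Position of the partially directed walk after `k` steps,
for a configuration `s` of `L` steps. -/
def pathPos (L : ℕ) (s : Fin L → Fin 3) (k : ℕ) : ℤ × ℤ :=
  ∑ i : Fin L, if (i : ℕ) < k then stepVec (s i) else 0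

/-- `s` encodes a path of `W_L` : it is self-avoiding (all visited sites are
distinct) and its last step is horizontal (step index `0`, i.e. `(1,0)`). -/
def IsPath (L : ℕ) (s : Fin L → Fin 3) : Prop :=
  (∀ j k : ℕ, j ≤ L → k ≤ L → pathPos L s j = pathPos L s k → j = k) ∧
  (∀ hL : 0 < L, s ⟨L - 1, by omega⟩ = 0)

/-- Two lattice sites are adjacent (at euclidean distance 1). -/
def adjacent (p q : ℤ × ℤ) : Prop := |p.1 - q.1| + |p.2 - q.2| = 1

/-- Number of self-touchings: pairs `(i,j)` with `i < j - 1`, `j ≤ L`,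
`‖w_i - w_j‖ = 1`. -/
def numTouch (L : ℕ) (s : Fin L → Fin 3) : ℕ :=
  ((Finset.range (L + 1) ×ˢ Finset.range (L + 1)).filter
    (fun ij => ij.1 + 1 < ij.2 ∧ adjacent (pathPos L s ij.1) (pathPos L s ij.2))).card

/-- The set `W_L` of valid `L`-step configurations. -/
def WL (L : ℕ) : Finset (Fin L → Fin 3) := Finset.univ.filter (IsPath L)

/-- Non-uniform weight of a configuration: each step taken at the origin or
after a horizontal step has weight `1/3`, each step after a vertical step has
weight `1/2`. -/
def nuWeight (L : ℕ) (s : Fin L → Fin 3) : ℝ :=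
  ∏ i : Fin L,
    if (i : ℕ) = 0 then (1 / 3 : ℝ)
    else if s ⟨(i : ℕ) - 1, by have := i.isLt; omega⟩ = 0 then 1 / 3 else 1 / 2

/-- The two models: uniform and non-uniform. -/
inductive Model | u | nu

/-- The law `P^m_L` on `W_L`. -/
def pweight : Model → (L : ℕ) → (Fin L → Fin 3) → ℝ
  | Model.u, L, _ => 1 / ((WL L).card : ℝ)
  | Model.nu, L, s => nuWeight L s

/-- The partition function `Z^m_{L,β} = Σ_{w ∈ W_L} e^{H_{L,β}(w)} P^m_L(w)`,
with Hamiltonian `H_{L,β}(w) = β · (number of self-touchings)`. -/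
def Z (m : Model) (L : ℕ) (β : ℝ) : ℝ :=
  ∑ s ∈ WL L, Real.exp (β * (numTouch L s : ℝ)) * pweight m L s

/-- The normalizing constant `c_β = (1+e^{-β/2})/(1-e^{-β/2})`. -/
def cbeta (β : ℝ) : ℝ := (1 + Real.exp (-β / 2)) / (1 - Real.exp (-β / 2))

/-- The geometric increment law `P_β(v = k) = e^{-(β/2)|k|}/c_β`. -/
def incP (β : ℝ) (k : ℤ) : ℝ := Real.exp (-(β / 2) * |(k : ℝ)|) / cbeta β

/-- Position `V_j` of the random walk built from increments `v`. -/
def Vpos (n : ℕ) (v : Fin n → ℤ) (j : ℕ) : ℤ :=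
  ∑ i : Fin n, if (i : ℕ) < j then v i else 0

/-- The area `A_n = Σ_{j=1}^n |V_j|`. -/
def areaA (n : ℕ) (v : Fin n → ℤ) : ℤ := ∑ j ∈ Finset.Icc 1 n, |Vpos n v j|

/-- Probability under `P_β` of an event `E` depending on the first `n`
increments of the random walk. -/
def wProb (β : ℝ) (n : ℕ) (E : (Fin n → ℤ) → Prop) : ℝ :=
  ∑' v : Fin n → ℤ, if E v then ∏ i : Fin n, incP β (v i) else 0

/-- `P_β(V_{n,k})`: the walk returns to `0` at time `n` with area `A_n = k`. -/
def PV (β : ℝ) (n k : ℕ) : ℝ :=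
  wProb β n fun v => Vpos n v n = 0 ∧ areaA n v = (k : ℤ)

/-- `P_β(V_{n,q})` for rational prescribed area `q`. -/
def PVq (β : ℝ) (n : ℕ) (q : ℚ) : ℝ :=
  wProb β n fun v => Vpos n v n = 0 ∧ (areaA n v : ℚ) = q

/-- `P_β(A_n ≤ α n, V_n = 0)`. -/
def Ple (β : ℝ) (n : ℕ) (α : ℝ) : ℝ :=
  wProb β n fun v => (areaA n v : ℝ) ≤ α * n ∧ Vpos n v n = 0

/-- `P_β(A_n ≤ α n)`. -/
def PleA (β : ℝ) (n : ℕ) (α : ℝ) : ℝ :=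
  wProb β n fun v => (areaA n v : ℝ) ≤ α * n

/-- `P_β(max_{1 ≤ j ≤ n} |V_j| ≤ α)`. -/
def Pmax (β : ℝ) (n : ℕ) (α : ℝ) : ℝ :=
  wProb β n fun v => ∀ j ∈ Finset.Icc 1 n, (|Vpos n v j| : ℝ) ≤ α

/-- `n ∈ N_α`, i.e. `n ≥ 2` and `α n ∈ ℕ`. -/
def Nmem (α : ℚ) (n : ℕ) : Prop := 2 ≤ n ∧ ∃ m : ℕ, α * (n : ℚ) = (m : ℚ)

/-- `g_β(α) = sup_{N ∈ N_α} (1/N) log P_β(V_{N, αN})` for rational `α ≥ 0`. -/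
def gQ (β : ℝ) (α : ℚ) : ℝ :=
  sSup {x : ℝ | ∃ n : ℕ, Nmem α n ∧ x = Real.log (PVq β n (α * n)) / n}

/-- `Γ^u(β) = c_β/e^β`, `Γ^nu(β) = 2c_β/(3e^β)`. -/
def Gam : Model → ℝ → ℝ
  | Model.u, β => cbeta β / Real.exp β
  | Model.nu, β => 2 * cbeta β / (3 * Real.exp β)

/-- `φ^u_β = β - log(1+√2)`, `φ^nu_β = β - log 2`. -/
def phim : Model → ℝ → ℝ
  | Model.u, β => β - Real.log (1 + Real.sqrt 2)
  | Model.nu, β => β - Real.log 2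

end

/-! A single path already gives the bound. The zig-zag walk with `m + 1` columns of height `h`,
run alternately upwards and downwards, touches itself `h` times between any two neighbouring
columns, so it has at least `m h` self-touchings, while its non-uniform weight is
`(1/3 · 2^(-h))^(m+1)`: only the first step of each column costs `1/3`. With `m = n`, `h = n + 1`
and `L = (n + 2)(n + 1)` this gives `(1/L) log Z^nu_{L,β} ≥ β - log 2 - O(1/n)`. -/

lemma pathPos_zero (L : ℕ) (s : Fin L → Fin 3) : pathPos L s 0 = 0 := by
  simp [pathPos]

lemma pathPos_succ (L : ℕ) (s : Fin L → Fin 3) {k : ℕ} (hk : k < L) :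
    pathPos L s (k + 1) = pathPos L s k + stepVec (s ⟨k, hk⟩) := by
  have hsplit : ∀ i : Fin L, (if (i : ℕ) < k + 1 then stepVec (s i) else 0) =
      (if (i : ℕ) < k then stepVec (s i) else 0) +
        (if i = ⟨k, hk⟩ then stepVec (s i) else 0) := by
    intro i
    rcases lt_trichotomy (i : ℕ) k with hi | hi | hi
    · simp [hi, Nat.lt_succ_of_lt hi, Fin.ext_iff, hi.ne]
    · simp [Fin.ext_iff, hi]
    · simp [Fin.ext_iff, hi.ne', hi.not_gt, (Nat.succ_le_of_lt hi).not_gt]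
  simp only [pathPos, hsplit, Finset.sum_add_distrib, Finset.sum_ite_eq', Finset.mem_univ, if_true]

lemma single_le_Z_nu (β : ℝ) {L : ℕ} {s : Fin L → Fin 3} (hs : s ∈ WL L) :
    Real.exp (β * numTouch L s) * nuWeight L s ≤ Z Model.nu L β := by
  refine Finset.single_le_sum (f := fun s => Real.exp (β * numTouch L s) * nuWeight L s)
    (fun s _ => mul_nonneg (Real.exp_pos _).le ?_) hs
  exact Finset.prod_nonneg fun i _ => by split_ifs <;> norm_num

lemma Finset.prod_range_mul_mod {M : Type*} [CommMonoid M] (f : ℕ → M) (n m : ℕ) :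
    ∏ i ∈ Finset.range (n * m), f (i % n) = (∏ i ∈ Finset.range n, f i) ^ m := by
  induction m with
  | zero => simp
  | succ m ih =>
    rw [Nat.mul_succ, Finset.prod_range_add, ih, pow_succ]
    congr 1
    refine Finset.prod_congr rfl fun i hi => ?_
    rw [Nat.mul_add_mod, Nat.mod_eq_of_lt (Finset.mem_range.mp hi)]

lemma Nat.exists_eq_add_one_mul_add (h k : ℕ) : ∃ q r, r ≤ h ∧ k = (h + 1) * q + r :=
  ⟨k / (h + 1), k % (h + 1), Nat.lt_succ_iff.mp (Nat.mod_lt _ h.succ_pos),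
    (Nat.div_add_mod k (h + 1)).symm⟩

lemma Nat.add_one_mul_add_div_of_le {h r : ℕ} (q : ℕ) (hr : r ≤ h) :
    ((h + 1) * q + r) / (h + 1) = q := by
  rw [Nat.mul_add_div h.succ_pos, Nat.div_eq_of_lt (Nat.lt_succ_of_le hr), add_zero]

lemma Nat.add_one_mul_add_mod_of_le {h r : ℕ} (q : ℕ) (hr : r ≤ h) :
    ((h + 1) * q + r) % (h + 1) = r := by
  rw [Nat.mul_add_mod, Nat.mod_eq_of_lt (Nat.lt_succ_of_le hr)]

section Zigzag

variable (h : ℕ)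

def zigzagStep (k : ℕ) : Fin 3 :=
  if k % (h + 1) = h then 0 else if k / (h + 1) % 2 = 0 then 1 else 2

def zigzag (L : ℕ) : Fin L → Fin 3 := fun i => zigzagStep h i

def zigzagPos (k : ℕ) : ℤ × ℤ :=
  ((k / (h + 1) : ℕ), if k / (h + 1) % 2 = 0 then (k % (h + 1) : ℕ) else h - (k % (h + 1) : ℕ))

variable {h}

lemma zigzagPos_mul_add (q : ℕ) {r : ℕ} (hr : r ≤ h) :
    zigzagPos h ((h + 1) * q + r) = ((q : ℤ), if q % 2 = 0 then (r : ℤ) else h - r) := by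
  simp only [zigzagPos, Nat.add_one_mul_add_div_of_le q hr, Nat.add_one_mul_add_mod_of_le q hr]

lemma zigzagStep_mul_add (q : ℕ) {r : ℕ} (hr : r ≤ h) :
    zigzagStep h ((h + 1) * q + r) = if r = h then 0 else if q % 2 = 0 then 1 else 2 := by
  simp only [zigzagStep, Nat.add_one_mul_add_div_of_le q hr, Nat.add_one_mul_add_mod_of_le q hr]

lemma zigzagPos_succ (k : ℕ) : zigzagPos h (k + 1) = zigzagPos h k + stepVec (zigzagStep h k) := by
  obtain ⟨q, r, hr, rfl⟩ := Nat.exists_eq_add_one_mul_add h k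
  rcases hr.lt_or_eq with hr | hr
  · rw [add_assoc, zigzagPos_mul_add q hr, zigzagPos_mul_add q hr.le, zigzagStep_mul_add q hr.le,
      if_neg hr.ne]
    split_ifs <;> simp [stepVec]; ring
  · subst r
    rw [show (h + 1) * q + h + 1 = (h + 1) * (q + 1) + 0 by ring, zigzagPos_mul_add _ h.zero_le,
      zigzagPos_mul_add q le_rfl, zigzagStep_mul_add q le_rfl, if_pos rfl]
    rcases Nat.mod_two_eq_zero_or_one q with hq | hq
    · simp [stepVec, hq, Nat.succ_mod_two_eq_one_iff.mpr hq]
    · simp [stepVec, hq, Nat.succ_mod_two_eq_zero_iff.mpr hq]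

lemma pathPos_zigzag {L k : ℕ} (hk : k ≤ L) : pathPos L (zigzag h L) k = zigzagPos h k := by
  induction k with
  | zero => simp [pathPos_zero, zigzagPos, Prod.ext_iff]
  | succ k ih => rw [pathPos_succ L _ hk, ih (Nat.le_of_succ_le hk), zigzagPos_succ]; rfl

lemma zigzagPos_injective : Function.Injective (zigzagPos h) := by
  intro j k hjk
  obtain ⟨q, r, hr, rfl⟩ := Nat.exists_eq_add_one_mul_add h j
  obtain ⟨q', r', hr', rfl⟩ := Nat.exists_eq_add_one_mul_add h k
  rw [zigzagPos_mul_add q hr, zigzagPos_mul_add q' hr', Prod.mk.injEq, Nat.cast_inj] at hjk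
  obtain ⟨rfl, hrr⟩ := hjk
  obtain rfl : r = r' := by split_ifs at hrr <;> omega
  rfl

lemma zigzag_isPath (m : ℕ) : IsPath ((h + 1) * (m + 1)) (zigzag h _) := by
  refine ⟨fun j k hj hk hjk => ?_, fun _ => ?_⟩
  · rw [pathPos_zigzag hj, pathPos_zigzag hk] at hjk
    exact zigzagPos_injective hjk
  · simp only [zigzag, show (h + 1) * (m + 1) - 1 = (h + 1) * m + h by rw [Nat.mul_succ]; omega,
      zigzagStep_mul_add m le_rfl, if_true]

lemma adjacent_zigzagPos (x : ℕ) {t : ℕ} (ht : t ≤ h) :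
    adjacent (zigzagPos h ((h + 1) * x + t)) (zigzagPos h ((h + 1) * (x + 1) + (h - t))) := by
  rw [zigzagPos_mul_add x ht, zigzagPos_mul_add (x + 1) (Nat.sub_le h t)]
  rcases Nat.mod_two_eq_zero_or_one x with hx | hx
  · simp [adjacent, hx, Nat.succ_mod_two_eq_one_iff.mpr hx, Nat.cast_sub ht]
  · simp [adjacent, hx, Nat.succ_mod_two_eq_zero_iff.mpr hx, Nat.cast_sub ht]

lemma mul_le_numTouch_zigzag (m : ℕ) : m * h ≤ numTouch ((h + 1) * (m + 1)) (zigzag h _) := by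
  rw [show m * h = (Finset.range m ×ˢ Finset.range h).card by simp]
  -- the site at height `t` of column `x` (counted along the walk) touches the site at the same
  -- height in column `x + 1`, which the walk reaches `2 (h - t) + 1` steps later
  refine Finset.card_le_card_of_injOn
    (fun p => ((h + 1) * p.1 + p.2, (h + 1) * (p.1 + 1) + (h - p.2))) ?_ ?_
  · rintro ⟨x, t⟩ hp
    simp only [Finset.coe_product, Set.mem_prod, Finset.mem_coe, Finset.mem_range] at hp
    have hcol : (h + 1) * (x + 1) ≤ (h + 1) * m := Nat.mul_le_mul_left _ hp.1
    have hx : (h + 1) * (x + 1) = (h + 1) * x + h + 1 := by ring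
    have hL : (h + 1) * (m + 1) = (h + 1) * m + h + 1 := by ring
    simp only [Finset.coe_filter, Set.mem_ofPred_eq, Finset.mem_product, Finset.mem_range]
    refine ⟨⟨by omega, by omega⟩, by omega, ?_⟩
    rw [pathPos_zigzag (by omega), pathPos_zigzag (by omega)]
    exact adjacent_zigzagPos x hp.2.le
  · rintro ⟨x, t⟩ hp ⟨x', t'⟩ hp' heq
    simp only [Finset.coe_product, Set.mem_prod, Finset.mem_coe, Finset.mem_range] at hp hp'
    have hfirst := (Prod.mk.inj heq).1
    have hx := congrArg (· / (h + 1)) hfirst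
    have ht := congrArg (· % (h + 1)) hfirst
    simp only [Nat.add_one_mul_add_div_of_le _ hp.2.le, Nat.add_one_mul_add_div_of_le _ hp'.2.le,
      Nat.add_one_mul_add_mod_of_le _ hp.2.le, Nat.add_one_mul_add_mod_of_le _ hp'.2.le] at hx ht
    rw [hx, ht]

lemma nuWeight_zigzag (m : ℕ) :
    nuWeight ((h + 1) * (m + 1)) (zigzag h _) = (1 / 3 * (1 / 2) ^ h) ^ (m + 1) := by
  set g : ℕ → ℝ := fun r => if r = 0 then 1 / 3 else 1 / 2
  have factor : ∀ i : ℕ, (if i = 0 then (1 / 3 : ℝ)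
      else if zigzagStep h (i - 1) = 0 then 1 / 3 else 1 / 2) = g (i % (h + 1)) := by
    rintro (_ | k)
    · simp [g]
    · have : zigzagStep h k = 0 ↔ k % (h + 1) = h := by
        unfold zigzagStep; split_ifs <;> simp_all
      simp [g, this, Nat.succ_mod_succ_eq_zero_iff]
  calc nuWeight ((h + 1) * (m + 1)) (zigzag h _)
      = ∏ i : Fin ((h + 1) * (m + 1)), g ((i : ℕ) % (h + 1)) :=
        Finset.prod_congr rfl fun i _ => factor i
    _ = (∏ r ∈ Finset.range (h + 1), g r) ^ (m + 1) := by
        rw [Fin.prod_univ_eq_prod_range (fun i => g (i % (h + 1))), Finset.prod_range_mul_mod]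
    _ = (1 / 3 * (1 / 2) ^ h) ^ (m + 1) := by
        simp [Finset.prod_range_succ', g, mul_comm]

lemma Z_nu_zigzag_ge {β : ℝ} (hβ : 0 ≤ β) (m : ℕ) :
    Real.exp (β * (m * h)) * (1 / 3 * (1 / 2) ^ h) ^ (m + 1) ≤
      Z Model.nu ((h + 1) * (m + 1)) β := by
  refine le_trans ?_
    (single_le_Z_nu β (Finset.mem_filter.mpr ⟨Finset.mem_univ _, zigzag_isPath m⟩))
  rw [nuWeight_zigzag]
  gcongr
  exact_mod_cast mul_le_numTouch_zigzag m

end Zigzag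

lemma le_log_Z_nu_div {β : ℝ} (hβ : 0 ≤ β) (n : ℕ) :
    β - Real.log 2 - (2 * β + Real.log 3 - Real.log 2) / (n + 2) ≤
      Real.log (Z Model.nu ((n + 2) * (n + 1)) β) / (((n + 2) * (n + 1) : ℕ) : ℝ) := by
  have hZ : _ ≤ Z Model.nu ((n + 2) * (n + 1)) β := Z_nu_zigzag_ge hβ n
  have hpos : 0 < Real.exp (β * (n * (n + 1 : ℕ))) * (1 / 3 * (1 / 2) ^ (n + 1)) ^ (n + 1) := by
    positivity
  have hlog : Real.log (Real.exp (β * (n * (n + 1 : ℕ))) * (1 / 3 * (1 / 2) ^ (n + 1)) ^ (n + 1)) =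
      (n + 1) * (β * n - Real.log 3 - (n + 1) * Real.log 2) := by
    rw [Real.log_mul (Real.exp_pos _).ne' (by positivity), Real.log_exp, Real.log_pow,
      Real.log_mul (by norm_num) (by positivity), Real.log_pow, one_div, one_div, Real.log_inv,
      Real.log_inv]
    push_cast
    ring
  rw [le_div_iff₀ (by positivity)]
  calc (β - Real.log 2 - (2 * β + Real.log 3 - Real.log 2) / (n + 2)) *
        (((n + 2) * (n + 1) : ℕ) : ℝ)
      = (n + 1) * (β * n - Real.log 3 - (n + 1) * Real.log 2) := by
        push_cast; field_simp; ring
    _ ≤ Real.log (Z Model.nu ((n + 2) * (n + 1)) β) := hlog ▸ Real.log_le_log hpos hZ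

/-- For every `β > 0`, the free energy of the non-uniform model
satisfies `f^nu(β) ≥ β - log 2`. -/
theorem stmt2 (β : ℝ) (hβ : 0 < β) (fnu : ℝ)
    (hf : Filter.Tendsto (fun L : ℕ => Real.log (Z Model.nu L β) / L)
      Filter.atTop (nhds fnu)) :
    fnu ≥ β - Real.log 2 := by
  have hsub : Tendsto (fun n : ℕ => (n + 2) * (n + 1)) atTop atTop :=
    tendsto_atTop_mono (fun n => show n ≤ _ by nlinarith) tendsto_id
  have hlim : Tendsto (fun n : ℕ => β - Real.log 2 - (2 * β + Real.log 3 - Real.log 2) / (n + 2))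
      atTop (nhds (β - Real.log 2)) := by
    have hvanish : Tendsto (fun n : ℕ => (2 * β + Real.log 3 - Real.log 2) / ((n : ℝ) + 2)) atTop
        (nhds 0) :=
      tendsto_const_nhds.div_atTop (tendsto_natCast_atTop_atTop.atTop_add tendsto_const_nhds)
    simpa using (tendsto_const_nhds (x := β - Real.log 2)).sub hvanish
  exact le_of_tendsto_of_tendsto' hlim (hf.comp hsub) (le_log_Z_nu_div hβ.le)
end

section
/- For every β > 0 and every rational α ≥ 0, the limit g_β(α) := lim_{N→∞, N∈N_α} (1/N) log P_β(V_{N, αN}) exists, is finite, is ≤ 0, and equals sup_{N∈N_α} (1/N) log P_β(V_{N, αN}). Moreover g_β(0) = −log c_β. -/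
open scoped Classical
open Filter

/-!
Concatenating a walk of `V_{p,αp}` with one of `V_{q,αq}` gives a walk of `V_{p+q,α(p+q)}`, because
the first one ends at `0`; by independence of the increments `n ↦ log P_β(V_{n,αn})` is
superadditive on `N_α`, and Fekete's lemma turns this into convergence of the normalized logarithms
to their supremum, which is `≤ 0` since they are logarithms of probabilities.
-/

open Topology

section Walk

variable {n m : ℕ}

@[simp]
lemma Vpos_at_zero (v : Fin n → ℤ) : Vpos n v 0 = 0 := by
  simp [Vpos]

@[simp]
lemma Vpos_zero (j : ℕ) : Vpos n 0 j = 0 := by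
  simp [Vpos]

@[simp]
lemma areaA_zero : areaA n 0 = 0 := by
  simp [areaA]

lemma Vpos_append_of_le (v : Fin n → ℤ) (w : Fin m → ℤ) {j : ℕ} (hj : j ≤ n) :
    Vpos (n + m) (Fin.append v w) j = Vpos n v j := by
  simp only [Vpos, Fin.sum_univ_add, Fin.append_left, Fin.append_right, Fin.val_castAdd,
    Fin.val_natAdd, add_eq_left]
  exact Finset.sum_eq_zero fun i _ => if_neg (by omega)

lemma Vpos_append_add (v : Fin n → ℤ) (w : Fin m → ℤ) (t : ℕ) :
    Vpos (n + m) (Fin.append v w) (n + t) = Vpos n v n + Vpos m w t := by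
  simp only [Vpos, Fin.sum_univ_add, Fin.append_left, Fin.append_right, Fin.val_castAdd,
    Fin.val_natAdd, Nat.add_lt_add_iff_left]
  congr 1
  exact Finset.sum_congr rfl fun i _ => by rw [if_pos (by omega), if_pos i.isLt]

lemma areaA_append (v : Fin n → ℤ) (w : Fin m → ℤ) (hv : Vpos n v n = 0) :
    areaA (n + m) (Fin.append v w) = areaA n v + areaA m w := by
  have hsplit :
      Finset.Icc 1 (n + m) = Finset.Icc 1 n ∪ (Finset.Icc 1 m).map (addLeftEmbedding n) := by
    rw [Finset.map_add_left_Icc]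
    ext j
    simp only [Finset.mem_Icc, Finset.mem_union]
    omega
  rw [areaA, hsplit, Finset.sum_union, Finset.sum_map]
  · congr 1
    · exact Finset.sum_congr rfl fun j hj => by rw [Vpos_append_of_le v w (Finset.mem_Icc.1 hj).2]
    · exact Finset.sum_congr rfl fun t _ => by
        rw [addLeftEmbedding_apply, Vpos_append_add, hv, zero_add]
  · rw [Finset.map_add_left_Icc, Finset.disjoint_left]
    intro j hj hj'
    simp only [Finset.mem_Icc] at hj hj'
    omega

lemma Vpos_succ_sub (v : Fin n → ℤ) (i : Fin n) : Vpos n v (i + 1) - Vpos n v i = v i := by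
  calc Vpos n v (i + 1) - Vpos n v i = ∑ k, if k = i then v k else 0 := by
        rw [Vpos, Vpos, ← Finset.sum_sub_distrib]
        refine Finset.sum_congr rfl fun k _ => ?_
        have : (k : ℕ) = i ↔ k = i := Fin.val_inj
        split_ifs <;> simp_all <;> omega
    _ = v i := by simp

lemma eq_zero_of_areaA_eq_zero {v : Fin n → ℤ} (hv : areaA n v = 0) : v = 0 := by
  have hV : ∀ j ≤ n, Vpos n v j = 0 := by
    intro j hj
    rcases Nat.eq_zero_or_pos j with rfl | hj0
    · exact Vpos_at_zero v
    · exact abs_eq_zero.1 <| (Finset.sum_eq_zero_iff_of_nonneg fun _ _ => abs_nonneg _).1 hv j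
        (Finset.mem_Icc.2 ⟨hj0, hj⟩)
  funext i
  rw [Pi.zero_apply, ← Vpos_succ_sub v, hV _ i.isLt, hV _ i.isLt.le, sub_zero]

end Walk

section Law

variable {β : ℝ}

lemma cbeta_pos (hβ : 0 < β) : 0 < cbeta β := by
  have hr : Real.exp (-β / 2) < 1 := Real.exp_lt_one_iff.2 (by linarith)
  exact div_pos (by positivity) (by linarith)

lemma incP_pos (hβ : 0 < β) (k : ℤ) : 0 < incP β k :=
  div_pos (Real.exp_pos _) (cbeta_pos hβ)

lemma incP_zero : incP β 0 = (cbeta β)⁻¹ := by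
  simp [incP]

lemma hasSum_incP (hβ : 0 < β) : HasSum (incP β) 1 := by
  set r := Real.exp (-β / 2)
  have hr0 : 0 ≤ r := (Real.exp_pos _).le
  have hr1 : r < 1 := Real.exp_lt_one_iff.2 (by linarith)
  have hgeom : ∀ k : ℤ, Real.exp (-(β / 2) * |(k : ℝ)|) = r ^ k.natAbs := by
    intro k
    rw [← Real.exp_nat_mul, Nat.cast_natAbs, Int.cast_abs]
    ring_nf
  have hsum : HasSum (fun k : ℤ => r ^ k.natAbs) (cbeta β) := by
    have h := HasSum.of_nat_of_neg (f := fun k : ℤ => r ^ k.natAbs)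
      (by simpa using hasSum_geometric_of_lt_one hr0 hr1)
      (by simpa using hasSum_geometric_of_lt_one hr0 hr1)
    have hc : cbeta β = (1 - r)⁻¹ + (1 - r)⁻¹ - r ^ Int.natAbs 0 := by
      change (1 + r) / (1 - r) = _
      rw [Int.natAbs_zero, pow_zero]
      field_simp [show 1 - r ≠ 0 by linarith]
      ring
    rwa [hc]
  have hinc : incP β = fun k => r ^ k.natAbs / cbeta β := funext fun k => by rw [incP, hgeom k]
  simpa [hinc, div_self (cbeta_pos hβ).ne'] using hsum.div_const (cbeta β)

noncomputable def walkWeight (β : ℝ) (n : ℕ) (v : Fin n → ℤ) : ℝ := ∏ i, incP β (v i)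

lemma walkWeight_pos (hβ : 0 < β) {n : ℕ} (v : Fin n → ℤ) : 0 < walkWeight β n v :=
  Finset.prod_pos fun _ _ => incP_pos hβ _

lemma walkWeight_append {n m : ℕ} (v : Fin n → ℤ) (w : Fin m → ℤ) :
    walkWeight β (n + m) (Fin.append v w) = walkWeight β n v * walkWeight β m w := by
  simp [walkWeight, Fin.prod_univ_add]

lemma HasSum.walkWeight_add {n m : ℕ} {s t : ℝ} (hv : HasSum (walkWeight β n) s)
    (hw : HasSum (walkWeight β m) t) (hβ : 0 < β) :
    HasSum (walkWeight β (n + m)) (s * t) := by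
  have hprod := hv.mul hw <| hv.summable.mul_of_nonneg hw.summable
    (fun v => (walkWeight_pos hβ v).le) (fun w => (walkWeight_pos hβ w).le)
  refine (Fin.appendEquiv n m).hasSum_iff.1 ?_
  have happend : walkWeight β (n + m) ∘ Fin.appendEquiv n m =
      fun x => walkWeight β n x.1 * walkWeight β m x.2 :=
    funext fun x => walkWeight_append x.1 x.2
  rwa [happend]

lemma hasSum_walkWeight (hβ : 0 < β) (n : ℕ) : HasSum (walkWeight β n) 1 := by
  induction n with
  | zero =>
    convert hasSum_unique (fun _ : Fin 0 → ℤ => (1 : ℝ)) using 1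
    funext v
    simp [walkWeight]
  | succ n ih =>
    have h1 : HasSum (walkWeight β 1) 1 := by
      rw [← (Equiv.funUnique (Fin 1) ℤ).symm.hasSum_iff]
      simpa [Function.comp_def, walkWeight] using hasSum_incP hβ
    simpa using ih.walkWeight_add h1 hβ

end Law

section Prob

variable {β : ℝ}

lemma wProb_eq_tsum_indicator (n : ℕ) (E : (Fin n → ℤ) → Prop) :
    wProb β n E = ∑' v, {v | E v}.indicator (walkWeight β n) v :=
  rfl

lemma summable_indicator_walkWeight (hβ : 0 < β) {n : ℕ} (s : Set (Fin n → ℤ)) :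
    Summable (s.indicator (walkWeight β n)) :=
  (hasSum_walkWeight hβ n).summable.indicator s

lemma wProb_le_one (hβ : 0 < β) (n : ℕ) (E : (Fin n → ℤ) → Prop) : wProb β n E ≤ 1 := by
  rw [wProb_eq_tsum_indicator, ← (hasSum_walkWeight hβ n).tsum_eq]
  exact (summable_indicator_walkWeight hβ _).tsum_le_tsum
    (Set.indicator_le_self' fun v _ => (walkWeight_pos hβ v).le) (hasSum_walkWeight hβ n).summable

lemma walkWeight_le_wProb (hβ : 0 < β) {n : ℕ} {E : (Fin n → ℤ) → Prop} {v : Fin n → ℤ}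
    (hv : E v) : walkWeight β n v ≤ wProb β n E := by
  rw [wProb_eq_tsum_indicator, ← Set.indicator_of_mem (s := {v | E v}) hv (walkWeight β n)]
  exact (summable_indicator_walkWeight hβ _).le_tsum v fun w _ =>
    Set.indicator_nonneg (fun w _ => (walkWeight_pos hβ w).le) w

lemma wProb_mul_wProb_le (hβ : 0 < β) {n m : ℕ} {E₁ : (Fin n → ℤ) → Prop}
    {E₂ : (Fin m → ℤ) → Prop} {E : (Fin (n + m) → ℤ) → Prop}
    (hE : ∀ v w, E₁ v → E₂ w → E (Fin.append v w)) :
    wProb β n E₁ * wProb β m E₂ ≤ wProb β (n + m) E := by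
  have hnonneg : ∀ {k : ℕ} (s : Set (Fin k → ℤ)), 0 ≤ s.indicator (walkWeight β k) :=
    fun s v => Set.indicator_nonneg (fun v _ => (walkWeight_pos hβ v).le) v
  have hprod := (summable_indicator_walkWeight hβ {v | E₁ v}).mul_of_nonneg
    (summable_indicator_walkWeight hβ {w | E₂ w}) (hnonneg _) (hnonneg _)
  have hpoint : ∀ x : (Fin n → ℤ) × (Fin m → ℤ),
      {v | E₁ v}.indicator (walkWeight β n) x.1 * {w | E₂ w}.indicator (walkWeight β m) x.2 ≤
        {u | E u}.indicator (walkWeight β (n + m)) (Fin.appendEquiv n m x) := by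
    rintro ⟨v, w⟩
    by_cases h : E₁ v ∧ E₂ w
    · have hvw : E (Fin.append v w) := hE v w h.1 h.2
      change _ ≤ {u | E u}.indicator _ (Fin.append v w)
      rw [Set.indicator_of_mem (s := {v | E₁ v}) h.1, Set.indicator_of_mem (s := {w | E₂ w}) h.2,
        Set.indicator_of_mem (s := {u | E u}) hvw, walkWeight_append]
    · have hzero : {v | E₁ v}.indicator (walkWeight β n) v *
          {w | E₂ w}.indicator (walkWeight β m) w = 0 := by
        rcases not_and_or.1 h with h | h <;> simp [h]
      exact hzero ▸ hnonneg _ _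
  rw [wProb_eq_tsum_indicator, wProb_eq_tsum_indicator, wProb_eq_tsum_indicator,
    (summable_indicator_walkWeight hβ _).tsum_mul_tsum (summable_indicator_walkWeight hβ _) hprod,
    ← (Fin.appendEquiv n m).tsum_eq]
  exact hprod.tsum_le_tsum hpoint
    ((Fin.appendEquiv n m).summable_iff.2 (summable_indicator_walkWeight hβ _))

lemma PVq_le_one (hβ : 0 < β) (n : ℕ) (q : ℚ) : PVq β n q ≤ 1 :=
  wProb_le_one hβ n _

lemma PVq_mul_PVq_le (hβ : 0 < β) (n m : ℕ) (q₁ q₂ : ℚ) :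
    PVq β n q₁ * PVq β m q₂ ≤ PVq β (n + m) (q₁ + q₂) := by
  refine wProb_mul_wProb_le hβ fun v w ⟨hv, hav⟩ ⟨hw, haw⟩ => ⟨?_, ?_⟩
  · rw [Vpos_append_add, hv, hw, add_zero]
  · rw [areaA_append v w hv, Int.cast_add, hav, haw]

lemma PVq_zero (n : ℕ) : PVq β n 0 = incP β 0 ^ n := by
  rw [PVq, wProb_eq_tsum_indicator, tsum_eq_single 0]
  · rw [Set.indicator_of_mem (show (0 : Fin n → ℤ) ∈ _ by simp)]
    simp [walkWeight]
  · intro v hv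
    refine Set.indicator_of_notMem (fun h => hv (eq_zero_of_areaA_eq_zero ?_)) _
    exact_mod_cast h.2

/-- The excursion `(m, -m)` has area `m`. -/
lemma PVq_two_pos (hβ : 0 < β) (m : ℕ) : 0 < PVq β 2 m := by
  have hwalk : Vpos 2 ![(m : ℤ), -m] 2 = 0 ∧ (areaA 2 ![(m : ℤ), -m] : ℚ) = m := by
    simp [Vpos, areaA, Fin.sum_univ_two, Finset.sum_Icc_succ_top]
  exact (walkWeight_pos hβ _).trans_le (walkWeight_le_wProb hβ hwalk)

lemma PVq_pos (hβ : 0 < β) {n : ℕ} (hn : 2 ≤ n) (m : ℕ) : 0 < PVq β n m := by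
  obtain ⟨k, rfl⟩ := Nat.exists_eq_add_of_le hn
  have hflat : 0 < PVq β k 0 := by
    rw [PVq_zero]
    exact pow_pos (incP_pos hβ 0) k
  calc 0 < PVq β 2 m * PVq β k 0 := mul_pos (PVq_two_pos hβ m) hflat
    _ ≤ PVq β (2 + k) (m + 0) := PVq_mul_PVq_le hβ 2 k m 0
    _ = PVq β (2 + k) m := by rw [add_zero]

end Prob

section Fekete

variable {a : ℕ → ℝ} {P : ℕ → Prop}

lemma mul_add_of_add_closed (hadd : ∀ p q, P p → P q → P (p + q)) {n₀ r : ℕ} (hn₀ : P n₀)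
    (hr : P r) (q : ℕ) : P (q * n₀ + r) := by
  induction q with
  | zero => simpa using hr
  | succ q ih => simpa [add_mul, add_comm, add_left_comm, add_assoc] using hadd _ _ hn₀ ih

lemma mul_add_le_of_superadditive (hadd : ∀ p q, P p → P q → P (p + q))
    (hsuper : ∀ p q, P p → P q → a p + a q ≤ a (p + q)) {n₀ r : ℕ} (hn₀ : P n₀) (hr : P r)
    (q : ℕ) : q * a n₀ + a r ≤ a (q * n₀ + r) := by
  induction q with
  | zero => simp
  | succ q ih =>
    have h := hsuper _ _ hn₀ (mul_add_of_add_closed hadd hn₀ hr q)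
    rw [show (q + 1) * n₀ + r = n₀ + (q * n₀ + r) by ring]
    push_cast
    linarith

lemma exists_mul_add_of_sub_closed (hadd : ∀ p q, P p → P q → P (p + q))
    (hsub : ∀ p q r, P q → P (p + q) → P r → r ≤ p → P p) {n₀ n : ℕ} (hn₀ : P n₀)
    (hn₀pos : 0 < n₀) (hn : P n) (h2n : 2 * n₀ ≤ n) :
    ∃ q r, n = q * n₀ + r ∧ P r ∧ r < 2 * n₀ := by
  obtain ⟨t, ht⟩ : ∃ t, n / n₀ = t + 2 :=
    ⟨n / n₀ - 2, by have := (Nat.le_div_iff_mul_le hn₀pos).2 h2n; omega⟩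
  have hdecomp : n = (t + 1) * n₀ + (n₀ + n % n₀) := by
    conv_lhs => rw [← Nat.div_add_mod n n₀, ht]
    ring
  have hmod : n % n₀ < n₀ := Nat.mod_lt _ hn₀pos
  refine ⟨t + 1, n₀ + n % n₀, hdecomp, hsub _ ((t + 1) * n₀) _ ?_ ?_ hn₀ (by omega), by omega⟩
  · simpa [add_mul] using mul_add_of_add_closed hadd hn₀ hn₀ t
  · rwa [add_comm, ← hdecomp]

lemma eventually_lt_div_of_superadditive (hpos : ∀ n, P n → 0 < n)
    (hadd : ∀ p q, P p → P q → P (p + q)) (hsub : ∀ p q r, P q → P (p + q) → P r → r ≤ p → P p)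
    (hsuper : ∀ p q, P p → P q → a p + a q ≤ a (p + q)) (hle : ∀ p, P p → a p ≤ 0)
    {n₀ : ℕ} (hn₀ : P n₀) {b : ℝ} (hb : b < a n₀ / n₀) :
    ∀ᶠ n in atTop ⊓ 𝓟 {n | P n}, b < a n / n := by
  have hn₀pos : (0 : ℝ) < n₀ := by exact_mod_cast hpos n₀ hn₀
  -- a lower bound for `a` on all the remainders `r < 2 n₀` of the decomposition `n = q n₀ + r`
  set C := (Finset.range (2 * n₀)).inf'
    (Finset.nonempty_range_iff.2 (by have := hpos n₀ hn₀; omega)) a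
  have hC : ∀ᶠ n : ℕ in atTop, b - a n₀ / n₀ < C / n :=
    (tendsto_const_div_atTop_nhds_zero_nat C).eventually (lt_mem_nhds (by linarith))
  rw [eventually_inf_principal]
  filter_upwards [eventually_ge_atTop (2 * n₀), hC] with n h2n hCn hn
  obtain ⟨q, r, rfl, hr, hr2⟩ :=
    exists_mul_add_of_sub_closed hadd hsub hn₀ (hpos n₀ hn₀) hn h2n
  have hnpos : (0 : ℝ) < ↑(q * n₀ + r) := by exact_mod_cast hpos _ hn
  have hqn : (q : ℝ) * n₀ ≤ ↑(q * n₀ + r) := by push_cast; linarith [r.cast_nonneg (α := ℝ)]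
  have hCr : C ≤ a r := Finset.inf'_le _ (Finset.mem_range.2 hr2)
  have hlead : a n₀ / n₀ ≤ q * a n₀ / ↑(q * n₀ + r) := by
    rw [div_le_div_iff₀ hn₀pos hnpos]
    nlinarith [hle n₀ hn₀]
  calc b < a n₀ / n₀ + C / ↑(q * n₀ + r) := by linarith
    _ ≤ (q * a n₀ + a r) / ↑(q * n₀ + r) := by
      rw [add_div]; gcongr
    _ ≤ a (q * n₀ + r) / ↑(q * n₀ + r) := by
      gcongr; exact mul_add_le_of_superadditive hadd hsuper hn₀ hr q

lemma bddAbove_div_of_nonpos (hle : ∀ p, P p → a p ≤ 0) :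
    BddAbove ((fun n => a n / n) '' {n | P n}) :=
  ⟨0, by rintro _ ⟨n, hn, rfl⟩; exact div_nonpos_of_nonpos_of_nonneg (hle n hn) n.cast_nonneg⟩

/-- Fekete's lemma along the indices in `P`. -/
theorem tendsto_div_csSup_of_superadditive (hpos : ∀ n, P n → 0 < n)
    (hadd : ∀ p q, P p → P q → P (p + q)) (hsub : ∀ p q r, P q → P (p + q) → P r → r ≤ p → P p)
    (hsuper : ∀ p q, P p → P q → a p + a q ≤ a (p + q)) (hle : ∀ p, P p → a p ≤ 0)
    (hne : {n | P n}.Nonempty) :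
    Tendsto (fun n => a n / n) (atTop ⊓ 𝓟 {n | P n})
      (𝓝 (sSup ((fun n => a n / n) '' {n | P n}))) := by
  refine tendsto_order.2 ⟨fun b hb => ?_, fun b hb => ?_⟩
  · obtain ⟨_, ⟨n₀, hn₀, rfl⟩, hb₀⟩ := exists_lt_of_lt_csSup (hne.image _) hb
    exact eventually_lt_div_of_superadditive hpos hadd hsub hsuper hle hn₀ hb₀
  · exact eventually_inf_principal.2 <| .of_forall fun n hn =>
      (le_csSup (bddAbove_div_of_nonpos hle) ⟨n, hn, rfl⟩).trans_lt hb

end Fekete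

section Rate

variable {β : ℝ} {α : ℚ}

lemma Nmem_add {p q : ℕ} (hp : Nmem α p) (hq : Nmem α q) : Nmem α (p + q) := by
  obtain ⟨hp2, mp, hmp⟩ := hp
  obtain ⟨-, mq, hmq⟩ := hq
  exact ⟨by omega, mp + mq, by push_cast; rw [mul_add, hmp, hmq]⟩

lemma Nmem_of_add (hα : 0 ≤ α) {p q r : ℕ} (hq : Nmem α q) (hpq : Nmem α (p + q))
    (hr : Nmem α r) (hrp : r ≤ p) : Nmem α p := by
  obtain ⟨-, mq, hmq⟩ := hq
  obtain ⟨-, mpq, hmpq⟩ := hpq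
  have hmp : α * p = mpq - mq := by rw [← hmpq, ← hmq]; push_cast; ring
  have hle : mq ≤ mpq := by
    have : (0 : ℚ) ≤ mpq - mq := hmp ▸ mul_nonneg hα p.cast_nonneg
    exact_mod_cast sub_nonneg.1 this
  exact ⟨hr.1.trans hrp, mpq - mq, by rw [hmp, Nat.cast_sub hle]⟩

lemma Nmem_two_mul_den (hα : 0 ≤ α) : Nmem α (2 * α.den) := by
  refine ⟨by have := α.den_pos; omega, 2 * α.num.toNat, ?_⟩
  have hnum : (α.num.toNat : ℚ) = α.num := by
    exact_mod_cast Int.toNat_of_nonneg (Rat.num_nonneg.2 hα)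
  push_cast
  rw [hnum, ← Rat.mul_den_eq_num]
  ring

lemma PVq_pos_of_Nmem (hβ : 0 < β) {n : ℕ} (hn : Nmem α n) : 0 < PVq β n (α * n) := by
  obtain ⟨h2, m, hm⟩ := hn
  exact hm ▸ PVq_pos hβ h2 m

noncomputable def logPVq (β : ℝ) (α : ℚ) (n : ℕ) : ℝ := Real.log (PVq β n (α * n))

lemma logPVq_nonpos (hβ : 0 < β) {n : ℕ} (hn : Nmem α n) : logPVq β α n ≤ 0 :=
  Real.log_nonpos (PVq_pos_of_Nmem hβ hn).le (PVq_le_one hβ n _)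

lemma logPVq_add_le (hβ : 0 < β) {p q : ℕ} (hp : Nmem α p) (hq : Nmem α q) :
    logPVq β α p + logPVq β α q ≤ logPVq β α (p + q) := by
  rw [logPVq, logPVq, logPVq, ← Real.log_mul (PVq_pos_of_Nmem hβ hp).ne'
    (PVq_pos_of_Nmem hβ hq).ne', Nat.cast_add, mul_add]
  exact Real.log_le_log (mul_pos (PVq_pos_of_Nmem hβ hp) (PVq_pos_of_Nmem hβ hq))
    (PVq_mul_PVq_le hβ p q _ _)

lemma gQ_eq_sSup_image : gQ β α = sSup ((fun n => logPVq β α n / n) '' {n | Nmem α n}) := by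
  rw [gQ]
  congr 1
  ext x
  simp [logPVq, eq_comm]

lemma gQ_nonpos (hβ : 0 < β) (hα : 0 ≤ α) : gQ β α ≤ 0 := by
  rw [gQ_eq_sSup_image]
  refine csSup_le (Set.Nonempty.image _ ⟨_, Nmem_two_mul_den hα⟩) ?_
  rintro _ ⟨n, hn, rfl⟩
  exact div_nonpos_of_nonpos_of_nonneg (logPVq_nonpos hβ hn) n.cast_nonneg

/-- With zero area the walk must stay at `0`, each step having probability `1 / c_β`. -/
lemma gQ_zero : gQ β 0 = -Real.log (cbeta β) := by
  have hconst : ∀ n ∈ {n | Nmem 0 n}, logPVq β 0 n / n = -Real.log (cbeta β) := by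
    intro n hn
    have hn0 : (n : ℝ) ≠ 0 := by have := hn.1; positivity
    rw [logPVq, zero_mul, PVq_zero, incP_zero, Real.log_pow, Real.log_inv]
    field_simp
  rw [gQ_eq_sSup_image, Set.image_congr hconst,
    Set.Nonempty.image_const (show {n | Nmem 0 n}.Nonempty from ⟨2, le_rfl, 0, by simp⟩),
    csSup_singleton]

end Rate

/-- For every `β > 0` and rational `α ≥ 0`, the limit
`g_β(α) = lim_{N→∞, N ∈ N_α} (1/N) log P_β(V_{N,αN})` exists, is finite,
nonpositive, equals the corresponding supremum, and `g_β(0) = -log c_β`. -/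
theorem stmt7 (β : ℝ) (hβ : 0 < β) (α : ℚ) (hα : 0 ≤ α) :
    Filter.Tendsto (fun n : ℕ => Real.log (PVq β n (α * n)) / n)
      (Filter.atTop ⊓ Filter.principal {n : ℕ | Nmem α n}) (nhds (gQ β α)) ∧
    gQ β α ≤ 0 ∧
    gQ β 0 = -Real.log (cbeta β) := by
  have hlim := tendsto_div_csSup_of_superadditive (a := logPVq β α) (P := Nmem α)
    (fun n hn => by have := hn.1; omega) (fun _ _ => Nmem_add) (fun _ _ _ => Nmem_of_add hα)
    (fun _ _ => logPVq_add_le hβ) (fun _ => logPVq_nonpos hβ) ⟨_, Nmem_two_mul_den hα⟩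
  rw [← gQ_eq_sSup_image] at hlim
  exact ⟨hlim, gQ_nonpos hβ hα, gQ_zero⟩
end
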